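/- arXiv:1312.5135 — 2 statements merged into one kernel-verified Lean document; each statement's English description precedes it below -/
import Mathlib

section
/- (Inductive step of the mirroring strategy.) Let n be odd and let S be a finite set of pairwise non-attacking positions on the n×n board such that the central position ((n−1)/2, (n−1)/2) belongs to S and S is closed under the half-turn rotation ρ(r,c) = (n−1−r, n−1−c). Suppose p is a position on the board that is not in S and is not attacked by any element of S. Then ρ(p) is not in S ∪ {p}, ρ(p) is not attacked by any element of S ∪ {p}, and the set S ∪ {p, ρ(p)} is pairwise non-attacking, contains the central position, is closed under ρ, and has cardinality |S| + 2. -/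
/-!
The half-turn `ρ` is an isometry of the board that preserves each of the four line directions, so
`q` attacks `ρ p` exactly when `ρ q` attacks `p`; as `S` is `ρ`-closed, `ρ p` is therefore safe
from `S` because `p` is. For odd `n`, any row, column or diagonal through both `p` and `ρ p` also
passes through the centre, so `p` and `ρ p` cannot attack each other: the centre lies in `S` and
does not attack `p`.
-/

/-- A position `(r, c)` lies on the `n × n` board iff `0 ≤ r, c ≤ n - 1`. -/
def onBoard (n : ℕ) (p : ℕ × ℕ) : Prop := p.1 ≤ n - 1 ∧ p.2 ≤ n - 1

/-- Two distinct positions attack each other iff they share a row, a column,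
a falling diagonal, or a rising diagonal. -/
def attacks (p q : ℕ × ℕ) : Prop :=
  p ≠ q ∧ (p.1 = q.1 ∨ p.2 = q.2 ∨ p.1 + p.2 = q.1 + q.2 ∨ p.1 + q.2 = q.1 + p.2)

/-- The half-turn rotation `ρ(r, c) = (n - 1 - r, n - 1 - c)` of the `n × n` board. -/
def rot (n : ℕ) (p : ℕ × ℕ) : ℕ × ℕ := (n - 1 - p.1, n - 1 - p.2)

/-- The central position of the `n × n` board for odd `n`. -/
def center (n : ℕ) : ℕ × ℕ := ((n - 1) / 2, (n - 1) / 2)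

lemma attacks_symm {p q : ℕ × ℕ} (h : attacks p q) : attacks q p := by
  obtain ⟨hne, hline⟩ := h
  exact ⟨hne.symm, by omega⟩

lemma rot_rot {n : ℕ} {p : ℕ × ℕ} (hp : onBoard n p) : rot n (rot n p) = p := by
  obtain ⟨h1, h2⟩ := hp
  simp only [rot, Prod.ext_iff]
  omega

lemma attacks_rot_iff {n : ℕ} {p q : ℕ × ℕ} (hp : onBoard n p) (hq : onBoard n q) :
    attacks q (rot n p) ↔ attacks (rot n q) p := by
  obtain ⟨h1, h2⟩ := hp
  obtain ⟨h3, h4⟩ := hq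
  simp only [attacks, rot, ne_eq, Prod.ext_iff]
  omega

lemma eq_center_of_rot_eq_self {n : ℕ} (hn : Odd n) {p : ℕ × ℕ} (h : rot n p = p) :
    p = center n := by
  obtain ⟨k, rfl⟩ := hn
  simp only [rot, center, Prod.ext_iff] at h ⊢
  omega

lemma attacks_center_of_attacks_rot {n : ℕ} (hn : Odd n) {p : ℕ × ℕ} (hp : onBoard n p)
    (hpc : p ≠ center n) (h : attacks p (rot n p)) : attacks (center n) p := by
  obtain ⟨k, rfl⟩ := hn
  obtain ⟨h1, h2⟩ := hp
  refine ⟨Ne.symm hpc, ?_⟩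
  simp only [attacks, center, rot, ne_eq, Prod.ext_iff] at h hpc ⊢
  omega

def NonAttacking (S : Finset (ℕ × ℕ)) : Prop :=
  ∀ a ∈ S, ∀ b ∈ S, a ≠ b → ¬ attacks a b

lemma NonAttacking.insert {S : Finset (ℕ × ℕ)} (hS : NonAttacking S) {x : ℕ × ℕ}
    (hx : ∀ q ∈ S, ¬ attacks q x) : NonAttacking (insert x S) := by
  intro a ha b hb hab
  rcases Finset.mem_insert.1 ha with rfl | ha <;> rcases Finset.mem_insert.1 hb with hbx | hb
  · exact absurd hbx.symm hab
  · exact fun h => hx b hb (attacks_symm h)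
  · exact hbx ▸ hx a ha
  · exact hS a ha b hb hab

/-- Inductive step of the mirroring strategy: if S is a pairwise non-attacking,
ρ-closed set of board positions containing the center, and p is a board position
not in S and not attacked by any element of S, then ρ(p) is not in S ∪ {p}, is
not attacked by any element of S ∪ {p}, and S ∪ {p, ρ(p)} is pairwise
non-attacking, contains the center, is closed under ρ, and has cardinality
|S| + 2. -/
theorem mirroring_step (n : ℕ) (hn : Odd n) (S : Finset (ℕ × ℕ))
    (hb : ∀ p ∈ S, onBoard n p)
    (hna : ∀ p ∈ S, ∀ q ∈ S, p ≠ q → ¬ attacks p q)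
    (hcen : center n ∈ S)
    (hcl : ∀ p ∈ S, rot n p ∈ S)
    (p : ℕ × ℕ) (hp : onBoard n p) (hpS : p ∉ S)
    (hpat : ∀ q ∈ S, ¬ attacks q p) :
    rot n p ∉ insert p S ∧
    (∀ q ∈ insert p S, ¬ attacks q (rot n p)) ∧
    (∀ a ∈ insert (rot n p) (insert p S), ∀ b ∈ insert (rot n p) (insert p S),
      a ≠ b → ¬ attacks a b) ∧
    center n ∈ insert (rot n p) (insert p S) ∧
    (∀ a ∈ insert (rot n p) (insert p S), rot n a ∈ insert (rot n p) (insert p S)) ∧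
    (insert (rot n p) (insert p S)).card = S.card + 2 := by
  have hpc : p ≠ center n := fun h => hpS (h ▸ hcen)
  have hrp_ne : rot n p ≠ p := fun h => hpc (eq_center_of_rot_eq_self hn h)
  have hrpS : rot n p ∉ S := fun h => hpS (rot_rot hp ▸ hcl _ h)
  have hrp_notMem : rot n p ∉ insert p S := by simp [hrp_ne, hrpS]
  have hrp_safe : ∀ q ∈ insert p S, ¬ attacks q (rot n p) := by
    refine Finset.forall_mem_insert _ _ _ |>.2 ⟨fun h => ?_, fun q hq h => ?_⟩
    · exact hpat _ hcen (attacks_center_of_attacks_rot hn hp hpc h)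
    · exact hpat _ (hcl q hq) ((attacks_rot_iff hp (hb q hq)).1 h)
  refine ⟨hrp_notMem, hrp_safe, NonAttacking.insert (NonAttacking.insert hna hpat) hrp_safe,
    by simp [hcen], ?_, by rw [Finset.card_insert_of_notMem hrp_notMem,
      Finset.card_insert_of_notMem hpS]⟩
  intro a ha
  simp only [Finset.mem_insert] at ha ⊢
  rcases ha with rfl | rfl | ha
  · simp [rot_rot hp]
  · simp
  · exact Or.inr (Or.inr (hcl a ha))
end

section
/- On the 4×4 board, each of the two sets {(1,1), (0,3), (3,2)} and {(1,1), (3,0), (2,3)} is pairwise non-attacking, and each is maximal: every position of the 4×4 board outside the set is attacked by some element of the set. (Hence in the queens placing game on the 4×4 board, after the first player opens at an inner cell and replies to the second player's move with the unique compatible cell, no legal move remains, so the first player, having made the last move, wins.) -/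
/-! The second set is the transpose of the first, and transposition `(r, c) ↦ (c, r)` preserves
the board and the attack relation, so it suffices to check the first set, a finite computation. -/

instance (p q : ℕ × ℕ) : Decidable (attacks p q) :=
  inferInstanceAs (Decidable (_ ∧ _))

def IsNonAttacking (S : Finset (ℕ × ℕ)) : Prop :=
  ∀ p ∈ S, ∀ q ∈ S, p ≠ q → ¬ attacks p q

def IsDominating (n : ℕ) (S : Finset (ℕ × ℕ)) : Prop :=
  ∀ p : ℕ × ℕ, onBoard n p → p ∉ S → ∃ q ∈ S, attacks q p

def transpose (S : Finset (ℕ × ℕ)) : Finset (ℕ × ℕ) :=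
  S.map (Equiv.prodComm ℕ ℕ).toEmbedding

lemma mem_transpose {S : Finset (ℕ × ℕ)} {p : ℕ × ℕ} : p ∈ transpose S ↔ p.swap ∈ S :=
  Finset.mem_map_equiv

lemma attacks_swap {p q : ℕ × ℕ} : attacks p.swap q.swap ↔ attacks p q := by
  simp only [attacks, Prod.fst_swap, Prod.snd_swap, ne_eq, Prod.swap_inj]
  constructor <;> rintro ⟨hne, h⟩ <;> refine ⟨hne, ?_⟩ <;> omega

lemma onBoard_swap {n : ℕ} {p : ℕ × ℕ} : onBoard n p.swap ↔ onBoard n p :=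
  and_comm

lemma IsNonAttacking.transpose {S : Finset (ℕ × ℕ)} (hS : IsNonAttacking S) :
    IsNonAttacking (transpose S) := fun p hp q hq hpq h =>
  hS p.swap (mem_transpose.1 hp) q.swap (mem_transpose.1 hq)
    (Prod.swap_injective.ne hpq) (attacks_swap.2 h)

lemma IsDominating.transpose {n : ℕ} {S : Finset (ℕ × ℕ)} (hS : IsDominating n S) :
    IsDominating n (transpose S) := fun p hp hpS => by
  obtain ⟨q, hq, hqp⟩ := hS p.swap (onBoard_swap.2 hp) (mt mem_transpose.2 hpS)
  exact ⟨q.swap, mem_transpose.2 (by rwa [Prod.swap_swap]), by rwa [← attacks_swap, Prod.swap_swap]⟩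

-- `hn` is needed because `n - 1` truncates: `onBoard 0 (0, 0)` holds.
lemma onBoard_iff_mem_range {n : ℕ} (hn : 0 < n) {p : ℕ × ℕ} :
    onBoard n p ↔ p ∈ Finset.range n ×ˢ Finset.range n := by
  simp only [onBoard, Finset.mem_product, Finset.mem_range]
  omega

lemma isDominating_iff {n : ℕ} (hn : 0 < n) {S : Finset (ℕ × ℕ)} :
    IsDominating n S ↔
      ∀ p ∈ Finset.range n ×ˢ Finset.range n, p ∉ S → ∃ q ∈ S, attacks q p := by
  simp only [IsDominating, onBoard_iff_mem_range hn]

/-- On the 4 × 4 board, each of the sets {(1,1), (0,3), (3,2)} and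
{(1,1), (3,0), (2,3)} is pairwise non-attacking and maximal: every board
position outside the set is attacked by some element of the set. -/
theorem maximal_sets_4x4 :
    (∀ p ∈ ({(1, 1), (0, 3), (3, 2)} : Finset (ℕ × ℕ)),
      ∀ q ∈ ({(1, 1), (0, 3), (3, 2)} : Finset (ℕ × ℕ)), p ≠ q → ¬ attacks p q) ∧
    (∀ p : ℕ × ℕ, onBoard 4 p → p ∉ ({(1, 1), (0, 3), (3, 2)} : Finset (ℕ × ℕ)) →
      ∃ q ∈ ({(1, 1), (0, 3), (3, 2)} : Finset (ℕ × ℕ)), attacks q p) ∧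
    (∀ p ∈ ({(1, 1), (3, 0), (2, 3)} : Finset (ℕ × ℕ)),
      ∀ q ∈ ({(1, 1), (3, 0), (2, 3)} : Finset (ℕ × ℕ)), p ≠ q → ¬ attacks p q) ∧
    (∀ p : ℕ × ℕ, onBoard 4 p → p ∉ ({(1, 1), (3, 0), (2, 3)} : Finset (ℕ × ℕ)) →
      ∃ q ∈ ({(1, 1), (3, 0), (2, 3)} : Finset (ℕ × ℕ)), attacks q p) := by
  have hna : IsNonAttacking {(1, 1), (0, 3), (3, 2)} := by unfold IsNonAttacking; decide
  have hdom : IsDominating 4 {(1, 1), (0, 3), (3, 2)} := (isDominating_iff (by norm_num)).2 (by decide)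
  have htr : transpose {(1, 1), (0, 3), (3, 2)} = {(1, 1), (3, 0), (2, 3)} := by decide
  exact ⟨hna, hdom, htr ▸ hna.transpose, htr ▸ hdom.transpose⟩
end
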